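/- Let a₁,…,a_m ∈ ℝⁿ be pairwise distinct and F(x) = (Σᵢ aᵢ/‖x-aᵢ‖)/(Σᵢ 1/‖x-aᵢ‖) for x not a vertex. Then lim_{x → a_k, x ≠ a_k} (F(x) - a_k)/‖x - a_k‖ = R_k, where R_k = Σ_{i≠k} (aᵢ - a_k)/‖aᵢ - a_k‖; in particular ‖F(x) - a_k‖/‖x - a_k‖ → ‖R_k‖. -/

import Mathlib

/-!
Multiplying `F x - a k` by `‖x - a k‖⁻¹` and clearing the singular weight `‖x - a k‖⁻¹` from the
denominator gives, for `x ≠ a k`,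
`‖x - a k‖⁻¹ • (F x - a k) = (1 + ‖x - a k‖ * ∑_{i ≠ k} ‖x - a i‖⁻¹)⁻¹ • ∑_{i ≠ k} ‖x - a i‖⁻¹ • (a i - a k)`.
The right-hand side is continuous at `a k`, where it takes the value `R`.
-/

open Filter Topology Finset

section Weiszfeld

variable {ι E : Type*} [Fintype ι] [DecidableEq ι] [NormedAddCommGroup E] [NormedSpace ℝ E]

noncomputable def weiszfeld (a : ι → E) (x : E) : E :=
  (∑ i, ‖x - a i‖⁻¹)⁻¹ • ∑ i, ‖x - a i‖⁻¹ • a i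

noncomputable def weiszfeldSlope (a : ι → E) (k : ι) (x : E) : E :=
  (1 + ‖x - a k‖ * ∑ i ∈ univ.erase k, ‖x - a i‖⁻¹)⁻¹ •
    ∑ i ∈ univ.erase k, ‖x - a i‖⁻¹ • (a i - a k)

theorem inv_norm_smul_weiszfeld_sub {a : ι → E} {k : ι} {x : E} (hx : x ≠ a k) :
    ‖x - a k‖⁻¹ • (weiszfeld a x - a k) = weiszfeldSlope a k x := by
  rw [weiszfeld, weiszfeldSlope]
  set S := ∑ i, ‖x - a i‖⁻¹
  have hk : 0 < ‖x - a k‖ := norm_pos_iff.2 (sub_ne_zero.2 hx)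
  have hS_split : S = ‖x - a k‖⁻¹ + ∑ i ∈ univ.erase k, ‖x - a i‖⁻¹ :=
    (add_sum_erase _ _ (mem_univ k)).symm
  have hS : S ≠ 0 := by
    rw [hS_split]
    exact (add_pos_of_pos_of_nonneg (inv_pos.2 hk)
      (sum_nonneg fun i _ => inv_nonneg.2 (norm_nonneg _))).ne'
  have hnum : ∑ i, ‖x - a i‖⁻¹ • a i - S • a k =
      ∑ i ∈ univ.erase k, ‖x - a i‖⁻¹ • (a i - a k) := by
    rw [sum_smul, ← sum_sub_distrib]
    simp only [← smul_sub]
    exact (sum_erase _ (by simp)).symm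
  have hcoef : ‖x - a k‖⁻¹ * S⁻¹ = (1 + ‖x - a k‖ * ∑ i ∈ univ.erase k, ‖x - a i‖⁻¹)⁻¹ := by
    rw [← mul_inv, hS_split, mul_add, mul_inv_cancel₀ hk.ne']
  rw [← hcoef, ← hnum, mul_smul, smul_sub S⁻¹, inv_smul_smul₀ hS, smul_sub]

theorem continuousAt_weiszfeldSlope {a : ι → E} {k : ι} (ha : ∀ i ≠ k, a i ≠ a k) :
    ContinuousAt (weiszfeldSlope a k) (a k) := by
  have hinv : ∀ i ∈ univ.erase k, ContinuousAt (fun x => ‖x - a i‖⁻¹) (a k) := fun i hi =>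
    (continuous_id.sub continuous_const).norm.continuousAt.inv₀
      (norm_ne_zero_iff.2 (sub_ne_zero.2 (ha i (ne_of_mem_erase hi)).symm))
  refine ContinuousAt.smul ?_ (tendsto_finsetSum _ fun i hi => (hinv i hi).smul continuousAt_const)
  refine (continuousAt_const.add ?_).inv₀ (by simp)
  exact (continuous_id.sub continuous_const).norm.continuousAt.mul (tendsto_finsetSum _ hinv)

theorem weiszfeldSlope_self (a : ι → E) (k : ι) :
    weiszfeldSlope a k (a k) = ∑ i ∈ univ.erase k, ‖a i - a k‖⁻¹ • (a i - a k) := by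
  simp [weiszfeldSlope, norm_sub_rev (a k)]

theorem tendsto_inv_norm_smul_weiszfeld_sub {a : ι → E} {k : ι} (ha : ∀ i ≠ k, a i ≠ a k) :
    Tendsto (fun x => ‖x - a k‖⁻¹ • (weiszfeld a x - a k)) (𝓝[≠] (a k))
      (𝓝 (∑ i ∈ univ.erase k, ‖a i - a k‖⁻¹ • (a i - a k))) := by
  rw [← weiszfeldSlope_self]
  refine (continuousAt_weiszfeldSlope ha).continuousWithinAt.tendsto.congr' ?_
  filter_upwards [self_mem_nhdsWithin] with x hx
  exact (inv_norm_smul_weiszfeld_sub hx).symm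

end Weiszfeld

theorem stmt_18 (n m : ℕ) (a : Fin m → EuclideanSpace ℝ (Fin n))
    (hdist : Function.Injective a) (k : Fin m)
    (F : EuclideanSpace ℝ (Fin n) → EuclideanSpace ℝ (Fin n))
    (hF : ∀ x ∉ Set.range a, F x = (∑ i, ‖x - a i‖⁻¹)⁻¹ • ∑ i, ‖x - a i‖⁻¹ • a i)
    (R : EuclideanSpace ℝ (Fin n))
    (hR : R = ∑ i ∈ Finset.univ.erase k, ‖a i - a k‖⁻¹ • (a i - a k)) :
    Tendsto (fun x => ‖x - a k‖⁻¹ • (F x - a k)) (𝓝[(Set.range a)ᶜ] (a k)) (𝓝 R) ∧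
    Tendsto (fun x => ‖F x - a k‖ / ‖x - a k‖) (𝓝[(Set.range a)ᶜ] (a k)) (𝓝 ‖R‖) := by
  have hsub : (Set.range a)ᶜ ⊆ {a k}ᶜ := Set.compl_subset_compl.2 (by simp)
  have hlim : Tendsto (fun x => ‖x - a k‖⁻¹ • (F x - a k)) (𝓝[(Set.range a)ᶜ] (a k)) (𝓝 R) := by
    rw [hR]
    refine ((tendsto_inv_norm_smul_weiszfeld_sub fun i hi => hdist.ne hi).mono_left
      (nhdsWithin_mono _ hsub)).congr' ?_
    filter_upwards [self_mem_nhdsWithin] with x hx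
    rw [hF x hx, weiszfeld]
  refine ⟨hlim, hlim.norm.congr fun x => ?_⟩
  rw [norm_smul, norm_inv, norm_norm, inv_mul_eq_div]
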